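/- arXiv:0705.1562 — 6 statements merged into one kernel-verified Lean document; each statement's English description precedes it below -/
import Mathlib

section
/- Let G be a strongly connected finite directed graph without loops with a distinguished sink vertex s. If T is a rotor configuration belonging to Rec(G) (i.e., the rotors form an oriented spanning tree rooted at the sink), then for every vertex x, the configuration e_x(T) obtained by starting a chip at x and running rotor-router walk until the chip reaches the sink also belongs to Rec(G). -/
/-- A finite directed multigraph without loops, together with a distinguished
sink vertex and, for each vertex `x`, a cyclic ordering of the edges emanating
from `x`: the outgoing edges at `x` are indexed by `ZMod (deg x)` (in cyclic
order), and `head x e` is the target of the edge `e`. -/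
structure RotorGraph (V : Type*) [Fintype V] [DecidableEq V] where
  sink : V
  deg : V → ℕ
  deg_pos : ∀ x, 0 < deg x
  head : ∀ x : V, ZMod (deg x) → V
  no_loops : ∀ x e, head x e ≠ x

namespace RotorGraph

variable {V : Type*} [Fintype V] [DecidableEq V] (G : RotorGraph V)

/-- `x` is adjacent to `y` if some edge goes from `x` to `y`. -/
def Adj (x y : V) : Prop := ∃ e, G.head x e = y

/-- `G` is strongly connected: every vertex has a directed path to every vertex. -/
def StronglyConnected : Prop := ∀ x y : V, Relation.ReflTransGen G.Adj x y

/-- A rotor configuration: each vertex carries a rotor pointing along one of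
its outgoing edges.  (The value at the sink is irrelevant: it is never read
nor modified by the rotor-router walk.) -/
abbrev Conf := ∀ x : V, ZMod (G.deg x)

/-- One step of rotor-router walk for the state (rotor configuration, chip
location): if the chip is not at the sink, first increment the rotor at the
chip's location to the next edge in the cyclic ordering, then move the chip
along this new edge.  States whose chip is at the sink are absorbing. -/
def step (p : G.Conf × V) : G.Conf × V :=
  if p.2 = G.sink then p
  else (Function.update p.1 p.2 (p.1 p.2 + 1), G.head p.2 (p.1 p.2 + 1))

/-- The target of the rotor at `x`. -/
def next (T : G.Conf) (x : V) : V := G.head x (T x)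

/-- The rotors of `T` contain an oriented cycle all of whose vertices lie in `A`. -/
def HasCycleIn (T : G.Conf) (A : Set V) : Prop :=
  ∃ (m : ℕ) (x : V), 0 < m ∧ (∀ i < m, (G.next T)^[i] x ∈ A) ∧ (G.next T)^[m] x = x

/-- `T ∈ Rec(G)`: the rotors at the non-sink vertices form no oriented cycle,
i.e. they form an oriented spanning tree rooted at the sink. -/
def Rec (T : G.Conf) : Prop := ¬ G.HasCycleIn T {y | y ≠ G.sink}

/-- `e_x(T)`: start a chip at `x` and let it perform rotor-router walk until
it first reaches the sink; `chip x T` is the resulting rotor configuration. -/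
noncomputable def chip (x : V) (T : G.Conf) : G.Conf :=
  haveI := Classical.dec (∃ n, (G.step^[n] (T, x)).2 = G.sink)
  if h : ∃ n, (G.step^[n] (T, x)).2 = G.sink then (G.step^[Nat.find h] (T, x)).1 else T

end RotorGraph

/-!
Throughout the walk, every rotor cycle avoiding the sink passes through the chip's current
vertex. Initially there are no such cycles at all. When the chip leaves `c` for `c'`, only the
rotor at `c` changes, so a new cycle avoiding the sink must use the new rotor at `c`, hence the
edge `c → c'`, and so it passes through `c'`. When the chip reaches the sink, the invariant says
that no rotor cycle avoids the sink.
-/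

open Function Set

theorem Function.iterate_apply_eq_of_eqOn {α : Type*} {f g : α → α} {A : Set α}
    (hfg : EqOn f g A) {x : α} {n : ℕ} (hx : ∀ i < n, f^[i] x ∈ A) : f^[n] x = g^[n] x := by
  induction n with
  | zero => rfl
  | succ n ih =>
    rw [iterate_succ_apply', iterate_succ_apply', ← ih fun i hi => hx i (by omega)]
    exact hfg (hx n n.lt_succ_self)

namespace RotorGraph

variable {V : Type*} [Fintype V] [DecidableEq V] {G : RotorGraph V}

theorem HasCycleIn.mono {T : G.Conf} {A B : Set V} (h : G.HasCycleIn T A) (hAB : A ⊆ B) :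
    G.HasCycleIn T B := by
  obtain ⟨m, x, hm, hA, hx⟩ := h
  exact ⟨m, x, hm, fun i hi => hAB (hA i hi), hx⟩

theorem HasCycleIn.of_eqOn {S S' : G.Conf} {A : Set V} (h : G.HasCycleIn S' A)
    (hagree : EqOn (G.next S') (G.next S) A) : G.HasCycleIn S A := by
  obtain ⟨m, z, hm, hA, hz⟩ := h
  refine ⟨m, z, hm, fun i hi => ?_, ?_⟩
  · rw [← iterate_apply_eq_of_eqOn hagree fun j hj => hA j (by omega)]
    exact hA i hi
  · rw [← iterate_apply_eq_of_eqOn hagree hA, hz]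

variable (G) in
def CyclesThroughChip (p : G.Conf × V) : Prop :=
  ¬ G.HasCycleIn p.1 {y | y ≠ G.sink ∧ y ≠ p.2}

theorem Rec.cyclesThroughChip {T : G.Conf} (hT : G.Rec T) (x : V) :
    G.CyclesThroughChip (T, x) :=
  fun h => hT (h.mono fun _ hy => hy.1)

theorem CyclesThroughChip.rec_of_chip_eq_sink {p : G.Conf × V} (hp : G.CyclesThroughChip p)
    (hsink : p.2 = G.sink) : G.Rec p.1 := by
  simpa [CyclesThroughChip, Rec, hsink] using hp

theorem CyclesThroughChip.step {p : G.Conf × V} (hp : G.CyclesThroughChip p) :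
    G.CyclesThroughChip (G.step p) := by
  obtain ⟨S, c⟩ := p
  by_cases hc : c = G.sink
  · simpa [RotorGraph.step, hc] using hp
  simp only [CyclesThroughChip, RotorGraph.step, hc, if_false]
  set S' := update S c (S c + 1)
  have hc' : G.head c (S c + 1) = G.next S' c := by simp [next, S']
  rintro ⟨m, z, hm, hA, hz⟩
  by_cases hvisit : ∃ i < m, (G.next S')^[i] z = c
  · -- the periodic orbit visits the new chip position `next S' c` at time `(i + 1) % m < m`
    obtain ⟨i, -, hi⟩ := hvisit
    have hperiodic : IsPeriodicPt (G.next S') m z := hz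
    have hmem := hA _ (Nat.mod_lt (i + 1) hm)
    rw [hperiodic.iterate_mod_apply, iterate_succ_apply', hi, ← hc'] at hmem
    exact hmem.2 rfl
  · push Not at hvisit
    have hB : ∀ i < m, (G.next S')^[i] z ∈ {y | y ≠ G.sink ∧ y ≠ c} :=
      fun i hi => ⟨(hA i hi).1, hvisit i hi⟩
    have hagree : EqOn (G.next S') (G.next S) {y | y ≠ G.sink ∧ y ≠ c} :=
      fun y hy => by simp [next, S', update_of_ne hy.2]
    exact hp (HasCycleIn.of_eqOn ⟨m, z, hm, hB, hz⟩ hagree)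

end RotorGraph

theorem stmt0_general {V : Type*} [Fintype V] [DecidableEq V] (G : RotorGraph V)
    (T : G.Conf) (hT : G.Rec T) (x : V) :
    G.Rec (G.chip x T) := by
  have hinv (n : ℕ) : G.CyclesThroughChip (G.step^[n] (T, x)) :=
    Iterate.rec _ (RotorGraph.Rec.cyclesThroughChip hT x) (fun _ hp => hp.step) n
  unfold RotorGraph.chip
  split
  · next hsink => exact (hinv _).rec_of_chip_eq_sink (Nat.find_spec hsink)
  · exact hT

/-- If `T ∈ Rec(G)` then `e_x(T) ∈ Rec(G)`. -/
theorem stmt0 {V : Type*} [Fintype V] [DecidableEq V] (G : RotorGraph V)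
    (hG : G.StronglyConnected) (T : G.Conf) (hT : G.Rec T) (x : V) :
    G.Rec (G.chip x T) :=
  stmt0_general G T hT x
end

section
/- Let G be a strongly connected finite directed graph without loops with sink s. Starting from a rotor configuration T_0 ∈ Rec(G) with a chip at x_0, let T_k and x_k be the rotor configuration and chip location after k rotor-router steps. If T_k ∈ Rec(G), then x_k ∉ {x_0, …, x_{k−1}}; that is, whenever the intermediate rotor configuration is an oriented spanning tree, the chip is at a vertex it has never visited before. -/
/-!
If the chip revisits its current position `x_k`, then every vertex visited before time `k` has
been exited at least once, and the rotor of `T_k` at such a vertex points to where the chip went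
after its last visit, which is again a visited vertex. So the rotors of `T_k` map the (non-sink)
set of visited vertices into itself, and iterating them inside this finite set closes a cycle,
contradicting `T_k ∈ Rec(G)`.
-/

namespace RotorGraph

variable {V : Type*} [Fintype V] [DecidableEq V] (G : RotorGraph V)

lemma step_of_ne_sink {p : G.Conf × V} (hp : p.2 ≠ G.sink) :
    G.step p = (Function.update p.1 p.2 (p.1 p.2 + 1), G.head p.2 (p.1 p.2 + 1)) :=
  if_neg hp

lemma next_step_fst_self {p : G.Conf × V} (hp : p.2 ≠ G.sink) :
    G.next (G.step p).1 p.2 = (G.step p).2 := by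
  simp [G.step_of_ne_sink hp, next]

lemma next_step_fst_of_ne {p : G.Conf × V} {v : V} (hv : v ≠ p.2) :
    G.next (G.step p).1 v = G.next p.1 v := by
  unfold step next
  split_ifs <;> simp [Function.update_of_ne hv]

lemma exists_iterate_step_eq_next (p : G.Conf × V) (n : ℕ)
    (hrun : ∀ i < n, (G.step^[i] p).2 ≠ G.sink) {v : V}
    (hv : ∃ i < n, (G.step^[i] p).2 = v) :
    ∃ i ≤ n, (G.step^[i] p).2 = G.next (G.step^[n] p).1 v := by
  induction n with
  | zero =>
    obtain ⟨i, hi, -⟩ := hv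
    exact absurd hi i.not_lt_zero
  | succ n ih =>
    by_cases hvn : v = (G.step^[n] p).2
    · refine ⟨n + 1, le_rfl, ?_⟩
      rw [hvn, Function.iterate_succ_apply', G.next_step_fst_self (hrun n n.lt_succ_self)]
    · obtain ⟨i, hi, hiv⟩ := hv
      have hin : i < n := lt_of_le_of_ne (Nat.le_of_lt_succ hi) (by rintro rfl; exact hvn hiv.symm)
      obtain ⟨j, hjn, hj⟩ := ih (fun i hi => hrun i (by omega)) ⟨i, hin, hiv⟩
      refine ⟨j, hjn.trans n.le_succ, ?_⟩
      rw [Function.iterate_succ_apply', G.next_step_fst_of_ne hvn, hj]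

lemma hasCycleIn_of_mapsTo {T : G.Conf} {S A : Set V} {x : V} (hx : x ∈ S)
    (hS : Set.MapsTo (G.next T) S S) (hSA : S ⊆ A) : G.HasCycleIn T A := by
  obtain ⟨a, b, hab, heq⟩ := Finite.exists_ne_map_eq_of_infinite fun n => (G.next T)^[n] x
  wlog hlt : a < b generalizing a b
  · exact this b a hab.symm heq.symm (hab.lt_or_gt.resolve_left hlt)
  refine ⟨b - a, (G.next T)^[a] x, Nat.sub_pos_of_lt hlt, fun i _ => hSA ?_, ?_⟩
  · rw [← Function.iterate_add_apply]
    exact hS.iterate _ hx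
  · rw [← Function.iterate_add_apply, Nat.sub_add_cancel hlt.le]
    exact heq.symm

end RotorGraph

theorem stmt2_general {V : Type*} [Fintype V] [DecidableEq V] (G : RotorGraph V)
    (T0 : G.Conf) (x0 : V) (k : ℕ)
    (hrun : ∀ i < k, (G.step^[i] (T0, x0)).2 ≠ G.sink)
    (h : G.Rec (G.step^[k] (T0, x0)).1) :
    ∀ i < k, (G.step^[i] (T0, x0)).2 ≠ (G.step^[k] (T0, x0)).2 := by
  intro i₀ hi₀ hrevisit
  set visited : Set V := {v | ∃ i < k, (G.step^[i] (T0, x0)).2 = v}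
  have hclosed : Set.MapsTo (G.next (G.step^[k] (T0, x0)).1) visited visited := by
    intro v hv
    obtain ⟨i, hik, hi⟩ := G.exists_iterate_step_eq_next _ k hrun hv
    rcases hik.lt_or_eq with hik | rfl
    · exact ⟨i, hik, hi⟩
    · exact ⟨i₀, hi₀, hrevisit.trans hi⟩
  refine h (G.hasCycleIn_of_mapsTo (S := visited) ⟨0, by omega, rfl⟩ hclosed ?_)
  rintro _ ⟨i, hi, rfl⟩
  exact hrun i hi

/-- Lemma 2(ii): starting from `T₀ ∈ Rec(G)` with a chip at `x₀`, suppose the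
chip performs `k` genuine rotor-router steps (it does not reach the sink
before time `k`).  If the configuration `T_k` after `k` steps is in `Rec(G)`,
then the chip location `x_k` is a vertex the chip has never visited before:
`x_k ∉ {x₀, …, x_{k-1}}`. -/
theorem stmt2 {V : Type*} [Fintype V] [DecidableEq V] (G : RotorGraph V)
    (hG : G.StronglyConnected) (T0 : G.Conf) (x0 : V) (hT0 : G.Rec T0) (k : ℕ)
    (hrun : ∀ i < k, (G.step^[i] (T0, x0)).2 ≠ G.sink)
    (h : G.Rec (G.step^[k] (T0, x0)).1) :
    ∀ i < k, (G.step^[i] (T0, x0)).2 ≠ (G.step^[k] (T0, x0)).2 :=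
  stmt2_general G T0 x0 k hrun h
end

section
/- Let G be a finite directed graph without loops with vertex set V. Suppose chips on G can be moved by a finite sequence of rotor-router steps, starting with u(x) chips at each vertex x and ending with v(x) chips at each vertex x, in such a way that the initial and final rotor configurations are identical. If H : V → ℝ is a function that is harmonic at every vertex which emitted a chip during the sequence, then Σ_{x∈V} H(x)u(x) = Σ_{x∈V} H(x)v(x). -/
/-- A finite directed multigraph without loops, with, for each vertex `x`, a
cyclic ordering of the edges emanating from `x`: the outgoing edges at `x` are
indexed by `ZMod (deg x)` (in cyclic order), and `head x e` is the target of
the edge `e`. -/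
structure RotorMultigraph (V : Type*) [Fintype V] [DecidableEq V] where
  deg : V → ℕ
  deg_pos : ∀ x, 0 < deg x
  head : ∀ x : V, ZMod (deg x) → V
  no_loops : ∀ x e, head x e ≠ x

namespace RotorMultigraph

variable {V : Type*} [Fintype V] [DecidableEq V] (G : RotorMultigraph V)

/-- A rotor configuration: each vertex carries a rotor pointing along one of
its outgoing edges. -/
abbrev Conf := ∀ x : V, ZMod (G.deg x)

/-- One rotor-router step in which the vertex `x` emits a chip: the rotor at
`x` is incremented to the next edge in the cyclic ordering, and one chip is
moved from `x` along this new edge.  The state records the rotor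
configuration together with the number of chips at each vertex. -/
def emit (p : G.Conf × (V → ℕ)) (x : V) : G.Conf × (V → ℕ) :=
  (Function.update p.1 x (p.1 x + 1),
    fun y =>
      (if y = x then p.2 y - 1 else p.2 y) +
        if y = G.head x (p.1 x + 1) then 1 else 0)

/-- `H` is harmonic at `x`:  `d_x · H(x) = Σ_y d_{xy} · H(y)`, the sum on the
right being over the outgoing edges of `x`. -/
def Harmonic (H : V → ℝ) (x : V) : Prop :=
  haveI : NeZero (G.deg x) := ⟨(G.deg_pos x).ne'⟩
  (G.deg x : ℝ) * H x = ∑ e : ZMod (G.deg x), H (G.head x e)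

end RotorMultigraph

/-! The potential `Σ_x H(x)·chips(x) - Σ_x ψ_x(ρ(x))`, where `ρ` is the rotor configuration
and `ψ_x(r)` (`rotorWeight`) sums `H(head e) - H(x)` over the edges `e = 1, …, r` at `x`, is
unchanged by an emission from a vertex `x` at which `H` is harmonic: the chip term changes by
`H(head) - H(x)`, which is exactly the increment of `ψ_x`, also when the rotor wraps around,
because harmonicity says the increments over a full turn sum to zero. Since the rotors end where
they started, the chip terms at the start and at the end agree. -/

open Finset

namespace ZMod

theorem sum_eq_sum_range {M : Type*} [AddCommMonoid M] (n : ℕ) [NeZero n] (f : ZMod n → M) :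
    ∑ e : ZMod n, f e = ∑ j ∈ range n, f j := by
  refine sum_nbij' val (fun j => (j : ZMod n)) ?_ ?_ ?_ ?_ ?_ <;>
    simp +contextual [val_lt, Nat.mod_eq_of_lt]

theorem sum_range_val_add_one_sub {M : Type*} [AddCommGroup M] {n : ℕ} [NeZero n]
    (f : ZMod n → M) (hf : ∑ e, f e = 0) (r : ZMod n) :
    ∑ j ∈ range (r + 1).val, f j - ∑ j ∈ range r.val, f j = f r := by
  have hr : ((r.val : ℕ) : ZMod n) = r := natCast_zmod_val r
  have hsucc : r + 1 = ((r.val + 1 : ℕ) : ZMod n) := by rw [Nat.cast_succ, hr]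
  rcases (show r.val + 1 ≤ n from r.val_lt).lt_or_eq with hlt | heq
  · rw [hsucc, val_cast_of_lt hlt, sum_range_succ, hr, add_sub_cancel_left]
  · have hfull := sum_range_succ (fun j => f j) r.val
    rw [heq, ← sum_eq_sum_range, hf, hr] at hfull
    rw [hsucc, heq, natCast_self, val_zero, sum_range_zero, zero_sub, neg_eq_iff_add_eq_zero,
      hfull]

end ZMod

namespace RotorMultigraph

variable {V : Type*} [Fintype V] [DecidableEq V] (G : RotorMultigraph V) (H : V → ℝ)

noncomputable def rotorWeight (x : V) (r : ZMod (G.deg x)) : ℝ :=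
  ∑ j ∈ range r.val, (H (G.head x (j + 1)) - H x)

variable {G H}

theorem rotorWeight_add_one_sub {x : V} (hH : G.Harmonic H x) (r : ZMod (G.deg x)) :
    G.rotorWeight H x (r + 1) - G.rotorWeight H x r = H (G.head x (r + 1)) - H x := by
  have : NeZero (G.deg x) := ⟨(G.deg_pos x).ne'⟩
  refine ZMod.sum_range_val_add_one_sub (fun e => H (G.head x (e + 1)) - H x) ?_ r
  refine (Equiv.sum_comp (Equiv.addRight 1) fun e => H (G.head x e) - H x).trans ?_
  rw [sum_sub_distrib, sum_const, card_univ, ZMod.card, nsmul_eq_mul, ← hH, sub_self]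

theorem cast_emit_snd {p : G.Conf × (V → ℕ)} {x : V} (hp : 0 < p.2 x) (y : V) :
    ((G.emit p x).2 y : ℝ) =
      p.2 y - (if y = x then 1 else 0) + (if y = G.head x (p.1 x + 1) then 1 else 0) := by
  by_cases hy : y = x
  · subst hy
    simp [emit, Nat.cast_sub hp]
  · simp [emit, hy]

theorem sum_mul_emit_snd {p : G.Conf × (V → ℕ)} {x : V} (hp : 0 < p.2 x) :
    ∑ y, H y * (G.emit p x).2 y = ∑ y, H y * p.2 y - H x + H (G.head x (p.1 x + 1)) := by
  simp only [cast_emit_snd hp, mul_add, mul_sub, mul_ite, mul_one, mul_zero, sum_add_distrib,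
    sum_sub_distrib, sum_ite_eq', mem_univ, if_true]

theorem sum_rotorWeight_emit_fst (p : G.Conf × (V → ℕ)) (x : V) :
    ∑ y, G.rotorWeight H y ((G.emit p x).1 y) =
      ∑ y, G.rotorWeight H y (p.1 y) +
        (G.rotorWeight H x (p.1 x + 1) - G.rotorWeight H x (p.1 x)) := by
  have hrest : ∑ y ∈ univ.erase x, G.rotorWeight H y ((G.emit p x).1 y) =
      ∑ y ∈ univ.erase x, G.rotorWeight H y (p.1 y) :=
    sum_congr rfl fun y hy => by dsimp only [emit]; rw [Function.update_of_ne (ne_of_mem_erase hy)]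
  rw [← add_sum_erase _ _ (mem_univ x), ← add_sum_erase _ _ (mem_univ x), hrest]
  dsimp only [emit]
  rw [Function.update_self]
  ring

variable (G H)

noncomputable def potential (p : G.Conf × (V → ℕ)) : ℝ :=
  ∑ x, H x * p.2 x - ∑ x, G.rotorWeight H x (p.1 x)

variable {G H}

theorem potential_emit {p : G.Conf × (V → ℕ)} {x : V} (hH : G.Harmonic H x) (hp : 0 < p.2 x) :
    G.potential H (G.emit p x) = G.potential H p := by
  rw [potential, potential, sum_mul_emit_snd hp, sum_rotorWeight_emit_fst,
    rotorWeight_add_one_sub hH]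
  ring

theorem potential_foldl_emit {L : List V} {p : G.Conf × (V → ℕ)}
    (hchips : ∀ i : Fin L.length, 0 < ((L.take i.val).foldl G.emit p).2 (L.get i))
    (hharm : ∀ x ∈ L, G.Harmonic H x) :
    G.potential H (L.foldl G.emit p) = G.potential H p := by
  induction L generalizing p with
  | nil => rfl
  | cons x L ih =>
    have hx : 0 < p.2 x := by simpa using hchips ⟨0, by simp⟩
    rw [List.foldl_cons, ih (fun i => by simpa using hchips i.succ)
      (fun y hy => hharm y (List.mem_cons_of_mem x hy)),
      potential_emit (hharm x List.mem_cons_self) hx]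

end RotorMultigraph

/-- Suppose chips can be moved by a finite sequence of rotor-router steps
(emitting, in order, from the vertices of the list `L`, each emitting vertex
holding at least one chip at the moment of emission), starting with `u x`
chips at each vertex `x` and ending with `v x` chips at each vertex `x`, in
such a way that the initial and final rotor configurations coincide.  If
`H : V → ℝ` is harmonic at every vertex which emitted a chip, then
`Σ_x H(x) u(x) = Σ_x H(x) v(x)`. -/
theorem stmt7 {V : Type*} [Fintype V] [DecidableEq V] (G : RotorMultigraph V)
    (T0 : G.Conf) (u v : V → ℕ) (H : V → ℝ) (L : List V)
    (hchips : ∀ i : Fin L.length,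
      0 < ((L.take i.val).foldl G.emit (T0, u)).2 (L.get i))
    (hrotors : (L.foldl G.emit (T0, u)).1 = T0)
    (hfinal : (L.foldl G.emit (T0, u)).2 = v)
    (hharm : ∀ x ∈ L, G.Harmonic H x) :
    ∑ x : V, H x * (u x : ℝ) = ∑ x : V, H x * (v x : ℝ) := by
  have hconst := RotorMultigraph.potential_foldl_emit hchips hharm
  rw [RotorMultigraph.potential, RotorMultigraph.potential, hrotors, hfinal] at hconst
  exact (sub_left_inj.mp hconst).symm
end

section
/- Let Y_n be the branch of height n of the ternary tree (d = 3) with root r, origin leaf o, and collapsed boundary vertex b. If all rotors in Y_n initially point in direction 1, then the first 2^n − 1 chips started at r alternate destinations: the first stops at b, the second at o, the third at b, and so on (odd-numbered chips stop at b, even-numbered at o). After these 2^n − 1 walks, all rotors again point in direction 1. -/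
/-!
The finite regular tree with chips stopped at the leaves.

Fix `d ≥ 3` and a height `n ≥ 1`.  The tree `T̂ₙ` is the finite rooted tree in
which every non-leaf vertex has `d - 1` children and every leaf is at distance
`n - 1` from the root, together with one extra leaf `o` attached to the root.
We encode its tree vertices as lists over `Fin (d - 1)` of length `≤ n - 1`
(the root is `[]`, children are obtained by appending a letter), and a chip
position is `Option (List (Fin (d - 1)))`, where `none` is the extra leaf `o`.

Every non-leaf (internal) vertex carries a rotor with `d` directions indexed
by `ZMod d`; the value `v` with `v < d - 1` points to the child obtained by
appending `v`, and the value `d - 1` points to the parent (for the root, to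
`o`).  A rotor-router step first increments the rotor at the chip's location
(cyclically), then moves the chip in the new direction.  Chips are stopped
upon reaching a leaf (`o` included): leaf positions are absorbing.  Note that
these dynamics coincide with those of the wired tree `T̄ₙ` (all leaves
collapsed to a single sink) and of the branch `Yₙ` (all leaves except `o`
collapsed to a single boundary vertex `b`): stopping at `b` means stopping at
a tree vertex of depth `n - 1`.
-/

/-- Rotor configurations (values at non-internal lists are irrelevant). -/
abbrev BConf (d : ℕ) := List (Fin (d - 1)) → ZMod d

/-- One rotor-router step on `T̂ₙ`; positions at the leaves are absorbing. -/
def bstep (d n : ℕ) (p : BConf d × Option (List (Fin (d - 1)))) :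
    BConf d × Option (List (Fin (d - 1))) :=
  match p with
  | (C, none) => (C, none)
  | (C, some w) =>
    if n ≤ w.length + 1 then (C, some w)
    else
      let r := C w + 1
      let C' := Function.update C w r
      if h : r.val < d - 1 then (C', some (w ++ [⟨r.val, h⟩]))
      else (C', if w = [] then none else some w.dropLast)

/-- Whether a position is a stopping position (the leaf `o` or a leaf of the
tree, i.e. a vertex of depth `n - 1`). -/
def bstoppedB (d n : ℕ) (p : Option (List (Fin (d - 1)))) : Bool :=
  match p with
  | none => true
  | some w => decide (n ≤ w.length + 1)

/-- Start one chip at the root `[]` and run rotor-router steps until the chip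
reaches a leaf; return the resulting rotor configuration together with the
position at which the chip stopped. -/
noncomputable def runChip (d n : ℕ) (C : BConf d) :
    BConf d × Option (List (Fin (d - 1))) :=
  haveI := Classical.dec (∃ k, bstoppedB d n ((bstep d n)^[k] (C, some [])).2 = true)
  if h : ∃ k, bstoppedB d n ((bstep d n)^[k] (C, some [])).2 = true then
    (bstep d n)^[Nat.find h] (C, some [])
  else (C, some [])

/-- The rotor configuration after `j` chips, started in succession at the
root, have walked until reaching a leaf (rotors persist between chips). -/
noncomputable def confAfter (d n : ℕ) (C : BConf d) : ℕ → BConf d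
  | 0 => C
  | j + 1 => (runChip d n (confAfter d n C j)).1

/-- The position at which the `(j+1)`-st chip stops (`j = 0, 1, 2, …`):
`none` means it stopped at `o`, `some w` that it stopped at the leaf `w`. -/
noncomputable def result (d n : ℕ) (C : BConf d) (j : ℕ) :
    Option (List (Fin (d - 1))) :=
  (runChip d n (confAfter d n C j)).2

/-!
Induction on the height of a subtree. A chip walking inside the subtree of `u` reads and writes
only the rotors of that subtree, so the state of a subtree is described by its root rotor and by
how many chips it has sent into each of its two child subtrees. By induction each child, started
from all rotors `0`, sends its chips alternately to a leaf and back up to its parent, and is back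
to all rotors `0` after `2 ^ m - 1` chips, `m` its height. Interleaving the two children with the
root rotor cycling right, up, left gives the same alternation one level higher, with a pattern
of period `4` in the chip number.
-/

open Function

abbrev Vertex (d : ℕ) := List (Fin (d - 1))

section General

variable {d n : ℕ}

def parentPos (u : Vertex d) : Option (Vertex d) := if u = [] then none else some u.dropLast

def rotorTarget (u : Vertex d) (r : ZMod d) : Option (Vertex d) :=
  if h : r.val < d - 1 then some (u ++ [⟨r.val, h⟩]) else parentPos u

def subtree (u : Vertex d) : Set (Vertex d) := {w | u <+: w}

@[simp]
lemma mem_subtree {u w : Vertex d} : w ∈ subtree u ↔ u <+: w := Iff.rfl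

instance (u : Vertex d) : DecidablePred (· ∈ subtree u) :=
  fun w => inferInstanceAs (Decidable (u <+: w))

lemma bstep_of_internal (C : BConf d) {u : Vertex d} (hu : u.length + 1 < n) :
    bstep d n (C, some u) = (update C u (C u + 1), rotorTarget u (C u + 1)) := by
  show (if n ≤ u.length + 1 then _ else _) = _
  rw [if_neg (by omega)]
  unfold rotorTarget parentPos
  split <;> rfl

lemma bstep_piecewise (C E : BConf d) {u w : Vertex d} (hw : u <+: w)
    (hn : w.length + 1 < n) :
    bstep d n ((subtree u).piecewise C E, some w) =
      ((subtree u).piecewise (bstep d n (C, some w)).1 E, (bstep d n (C, some w)).2) := by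
  rw [bstep_of_internal _ hn, bstep_of_internal _ hn, Set.piecewise_eq_of_mem (subtree u) C E hw]
  congr 1
  funext x
  by_cases hx : x = w
  · subst hx
    simp [hw]
  · by_cases hxs : x ∈ subtree u <;> simp [hx, hxs]

def SubtreeRun (n : ℕ) (u : Vertex d) (C : BConf d) (v : Vertex d) (D : BConf d)
    (p : Option (Vertex d)) : Prop :=
  ∃ t, (bstep d n)^[t] (C, some v) = (D, p) ∧
    ∀ s < t, ∃ w, u <+: w ∧ w.length + 1 < n ∧ ((bstep d n)^[s] (C, some v)).2 = some w

namespace SubtreeRun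

variable {u u' v x : Vertex d} {C D E : BConf d} {p : Option (Vertex d)}

lemma refl (u : Vertex d) (C : BConf d) (v : Vertex d) : SubtreeRun n u C v C (some v) :=
  ⟨0, rfl, by simp⟩

lemma single (hv : u <+: v) (hn : v.length + 1 < n) (h : bstep d n (C, some v) = (D, p)) :
    SubtreeRun n u C v D p :=
  ⟨1, h, fun s hs => ⟨v, hv, hn, by rw [Nat.lt_one_iff.mp hs]; rfl⟩⟩

lemma trans (h₁ : SubtreeRun n u C v D (some x)) (h₂ : SubtreeRun n u D x E p) :
    SubtreeRun n u C v E p := by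
  obtain ⟨t₁, ht₁, hstay₁⟩ := h₁
  obtain ⟨t₂, ht₂, hstay₂⟩ := h₂
  refine ⟨t₂ + t₁, by rw [iterate_add_apply, ht₁, ht₂], fun s hs => ?_⟩
  rcases Nat.lt_or_ge s t₁ with hs₁ | hs₁
  · exact hstay₁ s hs₁
  · obtain ⟨s, rfl⟩ := Nat.exists_eq_add_of_le' hs₁
    rw [iterate_add_apply, ht₁]
    exact hstay₂ s (by omega)

lemma mono (hu : u <+: u') (h : SubtreeRun n u' C v D p) : SubtreeRun n u C v D p := by
  obtain ⟨t, ht, hstay⟩ := h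
  refine ⟨t, ht, fun s hs => ?_⟩
  obtain ⟨w, hw, hwn, hpos⟩ := hstay s hs
  exact ⟨w, hu.trans hw, hwn, hpos⟩

lemma piecewise (h : SubtreeRun n u C v D p) (E : BConf d) :
    SubtreeRun n u ((subtree u).piecewise C E) v ((subtree u).piecewise D E) p := by
  obtain ⟨t, ht, hstay⟩ := h
  have key : ∀ s ≤ t, (bstep d n)^[s] ((subtree u).piecewise C E, some v) =
      ((subtree u).piecewise ((bstep d n)^[s] (C, some v)).1 E,
        ((bstep d n)^[s] (C, some v)).2) := by
    intro s hs
    induction s with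
    | zero => rfl
    | succ s ih =>
      obtain ⟨w, hw, hwn, hpos⟩ := hstay s hs
      have hX : (bstep d n)^[s] (C, some v) = (((bstep d n)^[s] (C, some v)).1, some w) :=
        Prod.ext rfl hpos
      rw [iterate_succ_apply', iterate_succ_apply', ih (by omega), hX,
        bstep_piecewise _ _ hw hwn]
  refine ⟨t, by rw [key t le_rfl, ht], fun s hs => ?_⟩
  rw [key s hs.le]
  exact hstay s hs

end SubtreeRun

lemma runChip_eq_of_subtreeRun {C D : BConf d} {p : Option (Vertex d)}
    (h : SubtreeRun n [] C [] D p) (hp : bstoppedB d n p = true) : runChip d n C = (D, p) := by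
  obtain ⟨t, ht, hstay⟩ := h
  have hstop : ∃ k, bstoppedB d n ((bstep d n)^[k] (C, some [])).2 = true :=
    ⟨t, by rw [ht]; exact hp⟩
  have hfind : Nat.find hstop = t := by
    refine (Nat.find_eq_iff hstop).2 ⟨by rw [ht]; exact hp, fun s hs => ?_⟩
    obtain ⟨w, -, hwn, hpos⟩ := hstay s hs
    simp [bstoppedB, hpos, hwn]
  unfold runChip
  rw [dif_pos hstop, hfind, ht]

structure AlternatingExits (n : ℕ) (u : Vertex d) (D : ℕ → BConf d) (K : ℕ) : Prop where
  toLeaf : ∀ i, 2 * i < K →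
    ∃ w : Vertex d, w.length + 1 = n ∧ SubtreeRun n u (D (2 * i)) u (D (2 * i + 1)) (some w)
  toParent : ∀ i, 2 * i + 1 < K →
    SubtreeRun n u (D (2 * i + 1)) u (D (2 * i + 2)) (parentPos u)

namespace AlternatingExits

variable {D : ℕ → BConf d} {K : ℕ} (h : AlternatingExits n [] D K)
include h

lemma runChip_even {i : ℕ} (hi : 2 * i < K) :
    ∃ w : Vertex d, w.length + 1 = n ∧ runChip d n (D (2 * i)) = (D (2 * i + 1), some w) := by
  obtain ⟨w, hw, hrun⟩ := h.toLeaf i hi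
  exact ⟨w, hw, runChip_eq_of_subtreeRun hrun (by simp [bstoppedB, hw])⟩

lemma runChip_odd {i : ℕ} (hi : 2 * i + 1 < K) :
    runChip d n (D (2 * i + 1)) = (D (2 * i + 2), none) :=
  runChip_eq_of_subtreeRun (h.toParent i hi) rfl

lemma confAfter_eq {C : BConf d} (h0 : D 0 = C) : ∀ j ≤ K, confAfter d n C j = D j := by
  intro j
  induction j with
  | zero => exact fun _ => h0.symm
  | succ j ih =>
    intro hj
    rw [confAfter, ih (by omega)]
    obtain ⟨i, rfl | rfl⟩ := Nat.even_or_odd' j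
    · obtain ⟨w, -, hrun⟩ := h.runChip_even (i := i) (by omega)
      rw [hrun]
    · rw [h.runChip_odd (i := i) (by omega)]

end AlternatingExits

end General

section Ternary

variable {n : ℕ} {u : Vertex 3} {ρ : ZMod 3} {CR CR' CL CL' C : BConf 3}
  {p : Option (Vertex 3)}

lemma parentPos_append_singleton (u : Vertex 3) (a : Fin 2) :
    parentPos (u ++ [a]) = some u := by
  simp [parentPos]

lemma self_notMem_subtree_append (u : Vertex 3) (a : Fin 2) : u ∉ subtree (u ++ [a]) :=
  fun h => by simpa using h.length_le

lemma eq_of_mem_subtree_append {u w : Vertex 3} {a b : Fin 2}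
    (ha : w ∈ subtree (u ++ [a])) (hb : w ∈ subtree (u ++ [b])) : a = b := by
  simpa using (List.prefix_of_prefix_length_le ha hb (by simp)).eq_of_length (by simp)

def glueConf (u : Vertex 3) (ρ : ZMod 3) (CR CL C : BConf 3) : BConf 3 :=
  update ((subtree (u ++ [1])).piecewise CR ((subtree (u ++ [0])).piecewise CL C)) u ρ

lemma glueConf_self : glueConf u ρ CR CL C u = ρ := update_self ..

lemma update_glueConf (ρ' : ZMod 3) :
    update (glueConf u ρ CR CL C) u ρ' = glueConf u ρ' CR CL C :=
  update_idem ..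

lemma glueConf_eq_self (hC : C u = ρ) : glueConf u ρ C C C = C := by
  simp [glueConf, ← hC]

lemma piecewise_glueConf_right :
    (subtree (u ++ [1])).piecewise CR' (glueConf u ρ CR CL C) = glueConf u ρ CR' CL C := by
  funext w
  by_cases hw : w = u
  · subst hw
    rw [Set.piecewise_eq_of_notMem _ _ _ (self_notMem_subtree_append w 1), glueConf_self,
      glueConf_self]
  · by_cases h1 : w ∈ subtree (u ++ [1]) <;> simp [glueConf, hw, h1]

lemma piecewise_glueConf_left :
    (subtree (u ++ [0])).piecewise CL' (glueConf u ρ CR CL C) = glueConf u ρ CR CL' C := by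
  funext w
  by_cases hw : w = u
  · subst hw
    rw [Set.piecewise_eq_of_notMem _ _ _ (self_notMem_subtree_append w 0), glueConf_self,
      glueConf_self]
  · by_cases h0 : w ∈ subtree (u ++ [0])
    · have h1 : w ∉ subtree (u ++ [1]) := fun h1 =>
        absurd (eq_of_mem_subtree_append h0 h1) (by decide)
      simp [glueConf, hw, h0, h1]
    · by_cases h1 : w ∈ subtree (u ++ [1]) <;> simp [glueConf, hw, h0, h1]

/-! The rotor at `u` cycles `0 → 1 → 2 → 0`, and these moves send the chip to `u ++ [1]`,
to the parent of `u`, and to `u ++ [0]` respectively. -/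
section Root

variable (hu : u.length + 1 < n)
include hu

lemma subtreeRun_glueConf_zero (h : SubtreeRun n (u ++ [1]) CR (u ++ [1]) CR' p) :
    SubtreeRun n u (glueConf u 0 CR CL C) u (glueConf u 1 CR' CL C) p := by
  have hstep : bstep 3 n (glueConf u 0 CR CL C, some u) =
      (glueConf u 1 CR CL C, some (u ++ [1])) := by
    rw [bstep_of_internal _ hu, glueConf_self, update_glueConf]
    rfl
  have hchild := h.piecewise (glueConf u 1 CR CL C)
  rw [piecewise_glueConf_right, piecewise_glueConf_right] at hchild
  exact (SubtreeRun.single List.prefix_rfl hu hstep).trans (hchild.mono (List.prefix_append u [1]))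

lemma subtreeRun_glueConf_one :
    SubtreeRun n u (glueConf u 1 CR CL C) u (glueConf u 2 CR CL C) (parentPos u) := by
  refine SubtreeRun.single List.prefix_rfl hu ?_
  rw [bstep_of_internal _ hu, glueConf_self, update_glueConf]
  rfl

lemma subtreeRun_glueConf_two (h : SubtreeRun n (u ++ [0]) CL (u ++ [0]) CL' p) :
    SubtreeRun n u (glueConf u 2 CR CL C) u (glueConf u 0 CR CL' C) p := by
  have hstep : bstep 3 n (glueConf u 2 CR CL C, some u) =
      (glueConf u 0 CR CL C, some (u ++ [0])) := by
    rw [bstep_of_internal _ hu, glueConf_self, update_glueConf]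
    rfl
  have hchild := h.piecewise (glueConf u 0 CR CL C)
  rw [piecewise_glueConf_left, piecewise_glueConf_left] at hchild
  exact (SubtreeRun.single List.prefix_rfl hu hstep).trans (hchild.mono (List.prefix_append u [0]))

end Root

end Ternary

section RootSeq

variable (u : Vertex 3) (DR DL : ℕ → BConf 3) (C : BConf 3)

/-- The configuration before the `k`-th chip started at `u`, given the configurations `DR j`, `DL j`
of the child subtrees after `j` chips: from chip `1` on, the root rotor and the numbers of chips
sent into the two children so far repeat with period `4`. -/
def rootSeq : ℕ → BConf 3
  | 0 => glueConf u 0 (DR 0) (DL 0) C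
  | k + 1 =>
    let q := k / 4
    match k % 4 with
    | 0 => glueConf u 1 (DR (2 * q + 1)) (DL (2 * q)) C
    | 1 => glueConf u 2 (DR (2 * q + 1)) (DL (2 * q)) C
    | 2 => glueConf u 0 (DR (2 * q + 1)) (DL (2 * q + 1)) C
    | _ => glueConf u 2 (DR (2 * q + 2)) (DL (2 * q + 1)) C

variable (q : ℕ)

lemma rootSeq_four_mul_add_one :
    rootSeq u DR DL C (4 * q + 1) = glueConf u 1 (DR (2 * q + 1)) (DL (2 * q)) C := by
  simp [rootSeq]

lemma rootSeq_four_mul_add_two :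
    rootSeq u DR DL C (4 * q + 2) = glueConf u 2 (DR (2 * q + 1)) (DL (2 * q)) C := by
  simp [rootSeq, show (4 * q + 1) / 4 = q by omega]

lemma rootSeq_four_mul_add_three :
    rootSeq u DR DL C (4 * q + 3) = glueConf u 0 (DR (2 * q + 1)) (DL (2 * q + 1)) C := by
  simp [rootSeq, show (4 * q + 2) / 4 = q by omega]

lemma rootSeq_four_mul_add_four :
    rootSeq u DR DL C (4 * q + 4) = glueConf u 2 (DR (2 * q + 2)) (DL (2 * q + 1)) C := by
  simp [rootSeq, show (4 * q + 3) / 4 = q by omega]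

end RootSeq

lemma alternatingExits_rootSeq {n Q : ℕ} {u : Vertex 3} {DR DL : ℕ → BConf 3} {C : BConf 3}
    (hun : u.length + 1 < n) (hR : AlternatingExits n (u ++ [1]) DR (2 * Q + 1))
    (hL : AlternatingExits n (u ++ [0]) DL (2 * Q + 1)) :
    AlternatingExits n u (rootSeq u DR DL C) (4 * Q + 3) := by
  have hup : ∀ a : Fin 2, parentPos (u ++ [a]) = some u := parentPos_append_singleton u
  refine ⟨fun i hi => ?_, fun i hi => ?_⟩
  · obtain ⟨q, rfl | rfl⟩ := Nat.even_or_odd' i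
    · rcases q with _ | q
      · obtain ⟨w, hw, hrun⟩ := hR.toLeaf 0 (by omega)
        refine ⟨w, hw, ?_⟩
        rw [rootSeq_four_mul_add_one u DR DL C 0]
        exact subtreeRun_glueConf_zero hun hrun
      · obtain ⟨w, hw, hrun⟩ := hR.toLeaf (q + 1) (by omega)
        have hback := hL.toParent q (by omega)
        rw [hup] at hback
        refine ⟨w, hw, ?_⟩
        rw [show 2 * (2 * (q + 1)) = 4 * q + 4 by ring,
          show 4 * q + 4 + 1 = 4 * (q + 1) + 1 by ring,
          rootSeq_four_mul_add_four, rootSeq_four_mul_add_one]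
        exact (subtreeRun_glueConf_two hun hback).trans (subtreeRun_glueConf_zero hun hrun)
    · obtain ⟨w, hw, hrun⟩ := hL.toLeaf q (by omega)
      refine ⟨w, hw, ?_⟩
      rw [show 2 * (2 * q + 1) = 4 * q + 2 by ring, rootSeq_four_mul_add_two,
        rootSeq_four_mul_add_three]
      exact subtreeRun_glueConf_two hun hrun
  · obtain ⟨q, rfl | rfl⟩ := Nat.even_or_odd' i
    · rw [show 2 * (2 * q) + 1 = 4 * q + 1 by ring, show 2 * (2 * q) + 2 = 4 * q + 2 by ring,
        rootSeq_four_mul_add_one, rootSeq_four_mul_add_two]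
      exact subtreeRun_glueConf_one hun
    · have hback := hR.toParent q (by omega)
      rw [hup] at hback
      rw [show 2 * (2 * q + 1) + 1 = 4 * q + 3 by ring,
        show 2 * (2 * q + 1) + 2 = 4 * q + 4 by ring,
        rootSeq_four_mul_add_three, rootSeq_four_mul_add_four]
      exact (subtreeRun_glueConf_zero hun hback).trans (subtreeRun_glueConf_one hun)

theorem exists_alternatingExits (n h : ℕ) {u : Vertex 3} {C : BConf 3}
    (hu : u.length + h + 1 = n) (hC : ∀ w, u <+: w → C w = 0) :
    ∃ D : ℕ → BConf 3, D 0 = C ∧ D (2 ^ (h + 1) - 1) = C ∧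
      AlternatingExits n u D (2 ^ (h + 1) - 1) := by
  induction h generalizing u C with
  | zero =>
    refine ⟨fun _ => C, rfl, rfl, ⟨fun i _ => ⟨u, by omega, SubtreeRun.refl u C u⟩, ?_⟩⟩
    intro i hi
    simp at hi
  | succ h ih =>
    obtain ⟨DR, hR0, hRK, hR⟩ := ih (u := u ++ [1]) (by simp; omega)
      (fun w hw => hC w ((List.prefix_append u [1]).trans hw))
    obtain ⟨DL, hL0, hLK, hL⟩ := ih (u := u ++ [0]) (by simp; omega)
      (fun w hw => hC w ((List.prefix_append u [0]).trans hw))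
    obtain ⟨Q, hQ⟩ : ∃ Q, 2 ^ (h + 1) - 1 = 2 * Q + 1 :=
      ⟨2 ^ h - 1, by have := Nat.one_le_two_pow (n := h); rw [pow_succ]; omega⟩
    have hK : 2 ^ (h + 1 + 1) - 1 = 4 * Q + 3 := by rw [pow_succ]; omega
    rw [hQ] at hRK hLK hR hL
    rw [hK]
    have hCu : C u = 0 := hC u List.prefix_rfl
    refine ⟨rootSeq u DR DL C, ?_, ?_, alternatingExits_rootSeq (by omega) hR hL⟩
    · rw [rootSeq, hR0, hL0, glueConf_eq_self hCu]
    · rw [rootSeq_four_mul_add_three, hRK, hLK, glueConf_eq_self hCu]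

/-- On the branch `Yₙ` of the ternary tree (`d = 3`), if all rotors initially
point in direction 1 (to the left child, encoded by `0 : ZMod 3`), then the
first `2ⁿ − 1` chips started at the root alternate destinations: chips
`1, 3, 5, …` (even `j` in 0-indexing) stop at the boundary `b` (i.e. at a leaf
of depth `n − 1`), and chips `2, 4, 6, …` (odd `j`) stop at `o`.  After these
`2ⁿ − 1` walks, all rotors again point in direction 1. -/
theorem stmt10 (n : ℕ) :
    (∀ j < 2 ^ n - 1,
      (Even j → ∃ w : List (Fin 2), w.length + 1 = n ∧
        result 3 n (fun _ => 0) j = some w) ∧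
      (Odd j → result 3 n (fun _ => 0) j = none)) ∧
    ∀ w : List (Fin 2), w.length + 1 < n →
      confAfter 3 n (fun _ => 0) (2 ^ n - 1) w = 0 := by
  rcases Nat.eq_zero_or_pos n with rfl | hn
  · simp
  obtain ⟨D, hD0, hDK, hD⟩ :=
    exists_alternatingExits n (n - 1) (u := []) (C := fun _ => 0) (by simp; omega)
      (fun _ _ => rfl)
  rw [Nat.sub_add_cancel hn] at hDK hD
  have hconf := hD.confAfter_eq hD0
  refine ⟨fun j hj => ⟨?_, ?_⟩, fun w _ => by rw [hconf _ le_rfl, hDK]⟩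
  · rintro ⟨i, rfl⟩
    rw [← two_mul] at hj ⊢
    obtain ⟨w, hw, hrun⟩ := hD.runChip_even hj
    exact ⟨w, hw, by rw [result, hconf _ hj.le, hrun]⟩
  · rintro ⟨i, rfl⟩
    rw [result, hconf _ hj.le, hD.runChip_odd hj]
end

section
/- Fix d ≥ 3 and let Y_n be the branch of height n of the d-regular tree with root r, origin leaf o, and collapsed boundary vertex b. If all rotors in Y_n initially point in direction d − 1, then each of the first n − 1 chips started at r reaches o before reaching b. After these n − 1 chips have stopped at o, all rotors point in direction d. -/
/-!
A chip standing at `w`, whose subtree has its rotors pointing to the parent down to depth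
`|w| + k - 1` and still in the initial direction at depth `|w| + k`, makes a complete excursion:
it visits the children of `w` in order, each visit being such an excursion one level shorter, and
then leaves to the parent of `w`, with every rotor of the subtree down to depth `|w| + k` now
pointing to the parent. Hence the `(j + 1)`-st chip finds the rotors at depth `< j` pointing to
the parent and the others untouched; its excursion from the root goes down to depth `j < n - 1`,
so it never reaches the boundary, and it exits to `o`.
-/

open Relation

theorem Function.exists_iterate_of_reflTransGen {α : Type*} {f : α → α} {P : α → Prop} {a b : α}
    (hab : ReflTransGen (fun x y => ¬ P x ∧ f x = y) a b) :
    ∃ T, f^[T] a = b ∧ ∀ t < T, ¬ P (f^[t] a) := by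
  induction hab using ReflTransGen.head_induction_on with
  | refl => exact ⟨0, rfl, by simp⟩
  | head hstep _ ih =>
    obtain ⟨hP, rfl⟩ := hstep
    obtain ⟨T, hT, hpre⟩ := ih
    refine ⟨T + 1, hT, ?_⟩
    rintro (_ | t) ht
    · exact hP
    · exact hpre t (by omega)

theorem Function.exists_find_iterate_eq_of_reflTransGen {α : Type*} {f : α → α} {P : α → Prop}
    [DecidablePred P] {a b : α} (hab : ReflTransGen (fun x y => ¬ P x ∧ f x = y) a b)
    (hb : P b) : ∃ h : ∃ k, P (f^[k] a), f^[Nat.find h] a = b := by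
  obtain ⟨T, hT, hpre⟩ := Function.exists_iterate_of_reflTransGen hab
  have h : ∃ k, P (f^[k] a) := ⟨T, hT ▸ hb⟩
  refine ⟨h, ?_⟩
  rwa [(Nat.find_eq_iff h).2 ⟨hT ▸ hb, hpre⟩]

namespace RotorTree

variable {d n : ℕ}

def ChipStep (d n : ℕ) (p q : BConf d × Option (List (Fin (d - 1)))) : Prop :=
  bstoppedB d n p.2 = false ∧ bstep d n p = q

theorem runChip_eq_of_reflTransGen {C : BConf d} {q : BConf d × Option (List (Fin (d - 1)))}
    (h : ReflTransGen (ChipStep d n) (C, some []) q) (hq : bstoppedB d n q.2 = true) :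
    runChip d n C = q := by
  obtain ⟨hex, hfind⟩ := Function.exists_find_iterate_eq_of_reflTransGen
    (P := fun p : BConf d × Option (List (Fin (d - 1))) => bstoppedB d n p.2 = true)
    (ReflTransGen.mono (fun _ _ hs => ⟨by simp [hs.1], hs.2⟩) _ _ h) hq
  rw [runChip, dif_pos hex]
  exact hfind

theorem chipStep_child {C : BConf d} {w : List (Fin (d - 1))} (hw : w.length + 2 ≤ n) {i : ℕ}
    (hi : i < d - 1) (hC : C w + 1 = i) :
    ChipStep d n (C, some w) (Function.update C w i, some (w ++ [⟨i, hi⟩])) := by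
  have : NeZero d := ⟨by omega⟩
  have hval : (C w + 1).val = i := by rw [hC, ZMod.val_natCast_of_lt (by omega)]
  refine ⟨by simp [bstoppedB]; omega, ?_⟩
  simp only [bstep]
  rw [if_neg (by omega), dif_pos (by omega)]
  simp [hC, Nat.mod_eq_of_lt (show i < d by omega)]

theorem chipStep_parent (hd : 2 ≤ d) {C : BConf d} {w : List (Fin (d - 1))}
    (hw : w.length + 2 ≤ n) (hC : C w + 1 = ((d - 1 : ℕ) : ZMod d)) :
    ChipStep d n (C, some w)
      (Function.update C w ((d - 1 : ℕ) : ZMod d), if w = [] then none else some w.dropLast) := by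
  have : NeZero d := ⟨by omega⟩
  have hval : (C w + 1).val = d - 1 := by rw [hC, ZMod.val_natCast_of_lt (by omega)]
  refine ⟨by simp [bstoppedB]; omega, ?_⟩
  simp only [bstep]
  rw [if_neg (by omega), dif_neg (by omega)]
  simp [hC]

def LayeredBelow (C : BConf d) (w : List (Fin (d - 1))) (k : ℕ) : Prop :=
  ∀ u, w <+: u → u.length ≤ w.length + k →
    C u = if u.length < w.length + k then ((d - 1 : ℕ) : ZMod d) else ((d - 2 : ℕ) : ZMod d)

def pointToParent (C : BConf d) (w : List (Fin (d - 1))) (k : ℕ) : BConf d :=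
  fun u => if w <+: u ∧ u.length ≤ w.length + k then ((d - 1 : ℕ) : ZMod d) else C u

/-- The configuration when the chip is back at `w` after its excursions into the children
`0, …, i - 1`: the rotor at `w` points to child `i - 1`, or to the parent when `i = 0`. -/
def exploredChildren (C : BConf d) (w : List (Fin (d - 1))) (k i : ℕ) : BConf d :=
  fun u =>
    if u = w then (i : ZMod d) - 1
    else if ∃ c : Fin (d - 1), c.val < i ∧ w ++ [c] <+: u ∧ u.length ≤ w.length + k + 1 then
      ((d - 1 : ℕ) : ZMod d)
    else C u

theorem pointToParent_zero (C : BConf d) (w : List (Fin (d - 1))) :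
    pointToParent C w 0 = Function.update C w ((d - 1 : ℕ) : ZMod d) := by
  funext u
  by_cases hu : u = w
  · subst hu; simp [pointToParent]
  · rw [Function.update_of_ne hu, pointToParent, if_neg]
    rintro ⟨hp, hl⟩
    exact hu (hp.eq_of_length (le_antisymm hp.length_le (by omega))).symm

theorem exploredChildren_zero (hd : 1 ≤ d) {C : BConf d} {w : List (Fin (d - 1))} {k : ℕ}
    (hC : LayeredBelow C w (k + 1)) : exploredChildren C w k 0 = C := by
  funext u
  by_cases hu : u = w
  · subst hu
    rw [exploredChildren, if_pos rfl, hC u List.prefix_rfl (by omega), if_pos (by omega),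
      Nat.cast_sub hd, ZMod.natCast_self, Nat.cast_zero, Nat.cast_one]
  · simp [exploredChildren, hu]

theorem layeredBelow_child {C : BConf d} {w : List (Fin (d - 1))} {k i : ℕ} (hi : i < d - 1)
    (hC : LayeredBelow C w (k + 1)) :
    LayeredBelow (Function.update (exploredChildren C w k i) w i) (w ++ [⟨i, hi⟩]) k := by
  intro u hu hl
  have hwu : w <+: u := (List.prefix_append w _).trans hu
  have hne : u ≠ w := by
    rintro rfl
    simpa using hu.length_le
  have hnot : ¬ ∃ c : Fin (d - 1), c.val < i ∧ w ++ [c] <+: u ∧ u.length ≤ w.length + k + 1 := by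
    rintro ⟨c, hc, hcu, -⟩
    obtain rfl : c = ⟨i, hi⟩ := by simpa using List.prefix_of_prefix_length_le hcu hu (by simp)
    exact lt_irrefl _ hc
  simp only [List.length_append, List.length_singleton] at hl
  rw [Function.update_of_ne hne, exploredChildren, if_neg hne, if_neg hnot,
    hC u hwu (by omega),
    show (w ++ [(⟨i, hi⟩ : Fin (d - 1))]).length + k = w.length + (k + 1) by simp; omega]

theorem exploredChildren_succ {C : BConf d} {w : List (Fin (d - 1))} {k i : ℕ} (hi : i < d - 1) :
    pointToParent (Function.update (exploredChildren C w k i) w i) (w ++ [⟨i, hi⟩]) k =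
      exploredChildren C w k (i + 1) := by
  funext u
  by_cases hu : u = w
  · subst hu
    have hnot : ¬ (u ++ [(⟨i, hi⟩ : Fin (d - 1))] <+: u) := fun h => by simpa using h.length_le
    simp [pointToParent, exploredChildren, hnot]
  · simp only [pointToParent, exploredChildren, Function.update_of_ne hu, if_neg hu,
      List.length_append, List.length_singleton]
    by_cases hnew : w ++ [⟨i, hi⟩] <+: u ∧ u.length ≤ w.length + 1 + k
    · rw [if_pos hnew, if_pos ⟨⟨i, hi⟩, Nat.lt_succ_self i, hnew.1, by omega⟩]
    · rw [if_neg hnew]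
      congr 1
      refine propext ⟨fun ⟨c, hc, hcu⟩ => ⟨c, by omega, hcu⟩, fun ⟨c, hc, hcu, hl⟩ => ?_⟩
      refine ⟨c, lt_of_le_of_ne (Nat.lt_succ_iff.1 hc) fun hci => hnew ?_, hcu, hl⟩
      obtain rfl : c = ⟨i, hi⟩ := Fin.ext hci
      exact ⟨hcu, by omega⟩

theorem update_exploredChildren_eq_pointToParent {C : BConf d} {w : List (Fin (d - 1))}
    {k : ℕ} :
    Function.update (exploredChildren C w k (d - 1)) w ((d - 1 : ℕ) : ZMod d) =
      pointToParent C w (k + 1) := by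
  funext u
  by_cases hu : u = w
  · subst hu
    simp [pointToParent]
  · simp only [pointToParent, exploredChildren, Function.update_of_ne hu, if_neg hu]
    congr 1
    refine propext ⟨fun ⟨c, _, hcu, hl⟩ => ⟨(List.prefix_append w [c]).trans hcu, by omega⟩,
      fun ⟨hwu, hl⟩ => ?_⟩
    have hlt : w.length < u.length :=
      lt_of_le_of_ne hwu.length_le fun h => hu (hwu.eq_of_length h).symm
    exact ⟨_, Fin.isLt _, List.concat_get_prefix hwu hlt, by omega⟩

theorem excursion (hd : 2 ≤ d) (k : ℕ) {w : List (Fin (d - 1))} {C : BConf d}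
    (hw : w.length + k + 2 ≤ n) (hC : LayeredBelow C w k) :
    ReflTransGen (ChipStep d n) (C, some w)
      (pointToParent C w k, if w = [] then none else some w.dropLast) := by
  induction k generalizing w C with
  | zero =>
    have hCw : C w + 1 = ((d - 1 : ℕ) : ZMod d) := by
      rw [hC w List.prefix_rfl le_rfl, if_neg (by omega),
        show d - 1 = d - 2 + 1 by omega, Nat.cast_succ]
    rw [pointToParent_zero]
    exact ReflTransGen.single (chipStep_parent hd (by omega) hCw)
  | succ k ih =>
    have explore : ∀ i ≤ d - 1,
        ReflTransGen (ChipStep d n) (C, some w) (exploredChildren C w k i, some w) := by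
      intro i
      induction i with
      | zero => intro _; rw [exploredChildren_zero (by omega) hC]
      | succ i ihi =>
        intro hi
        have hi' : i < d - 1 := by omega
        have hstep := chipStep_child (n := n) (C := exploredChildren C w k i) (w := w)
          (by omega) hi' (by simp [exploredChildren])
        have hsub := ih (w := w ++ [⟨i, hi'⟩]) (by simp; omega) (layeredBelow_child hi' hC)
        rw [exploredChildren_succ] at hsub
        exact (ihi (by omega)).trans (ReflTransGen.head hstep (by simpa using hsub))
    refine (explore (d - 1) le_rfl).tail ?_
    rw [← update_exploredChildren_eq_pointToParent]
    exact chipStep_parent hd (by omega) (by simp [exploredChildren])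

def stagedConf (d j : ℕ) : BConf d :=
  fun u => if u.length < j then ((d - 1 : ℕ) : ZMod d) else ((d - 2 : ℕ) : ZMod d)

theorem runChip_stagedConf (hd : 2 ≤ d) {j : ℕ} (hj : j + 2 ≤ n) :
    runChip d n (stagedConf d j) = (stagedConf d (j + 1), none) := by
  have hlayered : LayeredBelow (stagedConf d j) [] j := fun u _ _ => by simp [stagedConf]
  have hturned : pointToParent (stagedConf d j) [] j = stagedConf d (j + 1) := by
    funext u
    simp only [pointToParent, stagedConf, List.nil_prefix, true_and, List.length_nil, zero_add]
    split_ifs <;> first | rfl | omega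
  have hrun := excursion (n := n) hd j (by simpa) hlayered
  rw [hturned] at hrun
  exact runChip_eq_of_reflTransGen (by simpa using hrun) rfl

theorem confAfter_stagedConf (hd : 2 ≤ d) {j : ℕ} (hj : j + 1 ≤ n) :
    confAfter d n (stagedConf d 0) j = stagedConf d j := by
  induction j with
  | zero => rfl
  | succ j ih => rw [confAfter, ih (by omega), runChip_stagedConf hd (by omega)]

end RotorTree

open RotorTree in
/-- On the branch `Yₙ` of the `d`-regular tree, if all rotors initially point
in direction `d − 1` (encoded by `d - 2 : ZMod d`), then each of the first
`n − 1` chips started at the root reaches `o` before reaching the boundary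
`b`; after these `n − 1` chips have stopped at `o`, all rotors point in
direction `d` (to the parent, encoded by `d - 1 : ZMod d`). -/
theorem stmt12 (d n : ℕ) (hd : 3 ≤ d) :
    (∀ j < n - 1, result d n (fun _ => ((d - 2 : ℕ) : ZMod d)) j = none) ∧
    ∀ w : List (Fin (d - 1)), w.length + 1 < n →
      confAfter d n (fun _ => ((d - 2 : ℕ) : ZMod d)) (n - 1) w
        = ((d - 1 : ℕ) : ZMod d) := by
  have hinit : (fun _ => ((d - 2 : ℕ) : ZMod d)) = stagedConf d 0 := rfl
  rw [hinit]
  refine ⟨fun j hj => ?_, fun w hw => ?_⟩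
  · rw [result, confAfter_stagedConf (by omega) (by omega),
      runChip_stagedConf (by omega) (by omega)]
  · rw [confAfter_stagedConf (by omega) (by omega), stagedConf, if_pos (by omega)]
end

section
/- Let a be a binary word satisfying condition (P_k), and let ψ(a) = (c, d). Then c and d each satisfy condition (P_{k−1}). -/
/-!
Write the word as blocks `0`, `10`, `110` of weights `0`, `1`, `2` (their numbers of ones).
A run of `2^(k-1) - 1` consecutive blocks spells a word with exactly that many zeros, the last
one at its end; if the run had weight above `2^(k-1)`, its first `2^k - 1` letters would be a
window of `a` with more than `2^(k-1)` ones. So every such run has weight at most `2^(k-1)`.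
Along the run, `c` (and likewise `d`) is `1` on each `110` and on every other `10`, so twice
its number of ones is at most the weight plus one, hence at most `2^(k-1) + 1`, which forces
at most `2^(k-2)` ones.
-/

/-- Condition `(P_k)` for a binary word: every subword (block of consecutive
letters) of length `2ᵏ − 1` contains at most `2^(k−1)` ones. -/
def CondP (w : List Bool) (k : ℕ) : Prop :=
  ∀ i : ℕ, i + (2 ^ k - 1) ≤ w.length →
    ((w.drop i).take (2 ^ k - 1)).count true ≤ 2 ^ (k - 1)

/-- The three blocks `0`, `10`, `110` from which a binary word with no three
consecutive ones can be assembled (up to one extra final `0`). -/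
inductive Blk : Type
  | z : Blk    -- the block `0`
  | oz : Blk   -- the block `10`
  | ooz : Blk  -- the block `110`
  deriving DecidableEq

/-- The binary word corresponding to a block. -/
def Blk.toWord : Blk → List Bool
  | .z => [false]
  | .oz => [true, false]
  | .ooz => [true, true, false]

/-- The first word `c` of the pair `ψ(a) = (c, d)`, computed from the block
factorization `a = b₁ ⋯ b_m`: `c_j = 0` if `b_j = 0`; `c_j = 1` if
`b_j = 110`; and if `b_j = 10` then `c_j = 1` or `0` according as
`#{i < j : b_i = 10}` is even or odd. -/
def psiC (bs : List Blk) : List Bool :=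
  List.ofFn fun j : Fin bs.length =>
    match bs.get j with
    | .z => false
    | .ooz => true
    | .oz => decide (Even ((bs.take j.val).count Blk.oz))

/-- The second word `d` of the pair `ψ(a) = (c, d)`: `d_j = 0` if `b_j = 0`;
`d_j = 1` if `b_j = 110`; and if `b_j = 10` then `d_j = 0` or `1` according
as `#{i < j : b_i = 10}` is even or odd. -/
def psiD (bs : List Blk) : List Bool :=
  List.ofFn fun j : Fin bs.length =>
    match bs.get j with
    | .z => false
    | .ooz => true
    | .oz => decide (Odd ((bs.take j.val).count Blk.oz))

namespace Blk

def weight : Blk → ℕ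
  | .z => 0
  | .oz => 1
  | .ooz => 2

@[simp]
lemma count_true_toWord (b : Blk) : b.toWord.count true = b.weight := by
  cases b <;> rfl

@[simp]
lemma length_toWord (b : Blk) : b.toWord.length = b.weight + 1 := by
  cases b <;> rfl

lemma length_flatten_toWord (u : List Blk) :
    (u.map toWord).flatten.length = u.length + (u.map weight).sum := by
  induction u with
  | nil => rfl
  | cons b u ih => simp only [List.map_cons, List.flatten_cons, List.length_append, ih,
      length_toWord, List.length_cons, List.sum_cons]; ring

/-- Only the final letter of each block is a `0`, so a proper prefix of the word of `u`
misses at least one of its `u.length` zeros. -/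
lemma lt_count_true_take_flatten_toWord {u : List Blk} {n : ℕ}
    (hn : n < (u.map toWord).flatten.length) :
    n < ((u.map toWord).flatten.take n).count true + u.length := by
  induction u generalizing n with
  | nil => simp at hn
  | cons b u ih =>
    simp only [List.map_cons, List.flatten_cons, List.length_append, length_toWord] at hn ⊢
    rcases lt_or_ge n (b.weight + 1) with hb | hb
    · rw [List.take_append_of_le_length (by simp; omega)]
      cases b <;> simp only [weight] at hb <;> interval_cases n <;> simp [toWord]
    · obtain ⟨m, rfl⟩ := Nat.exists_eq_add_of_le hb
      have := ih (n := m) (by omega)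
      rw [List.take_append, List.take_of_length_le (by simp)]
      simp only [List.count_append, count_true_toWord, length_toWord, List.length_cons,
        Nat.add_sub_cancel_left]
      omega

end Blk

/-- `psiWith s bs` computes `ψ` with the parity of the number of `10` blocks read so far
kept as a state (`s = true` while it is even): `psiC = psiWith true` and
`psiD = psiWith false`. -/
def psiWith : Bool → List Blk → List Bool
  | _, [] => []
  | s, .z :: t => false :: psiWith s t
  | s, .ooz :: t => true :: psiWith s t
  | s, .oz :: t => s :: psiWith (!s) t

lemma psiC_eq_psiWith_and_psiD_eq_psiWith (bs : List Blk) :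
    psiC bs = psiWith true bs ∧ psiD bs = psiWith false bs := by
  induction bs with
  | nil => exact ⟨rfl, rfl⟩
  | cons b t ih =>
    obtain ⟨hc, hd⟩ := ih
    simp only [psiC, psiD] at hc hd
    cases b <;> simp [psiC, psiD, psiWith, List.ofFn_succ, Nat.even_add_one, Nat.odd_add_one,
      ← hc, ← hd]

lemma condP_zero (w : List Bool) : CondP w 0 := by
  simp [CondP]

@[simp]
lemma length_psiWith (s : Bool) (t : List Blk) : (psiWith s t).length = t.length := by
  induction t generalizing s with
  | nil => rfl
  | cons b t ih => cases b <;> simp [psiWith, ih]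

lemma exists_drop_psiWith (s : Bool) (t : List Blk) (i : ℕ) :
    ∃ s', (psiWith s t).drop i = psiWith s' (t.drop i) := by
  induction t generalizing s i with
  | nil => exact ⟨s, by simp [psiWith]⟩
  | cons b t ih =>
    cases i with
    | zero => exact ⟨s, rfl⟩
    | succ i => cases b <;> simpa [psiWith] using ih _ i

lemma two_mul_count_true_take_psiWith_le (s : Bool) (t : List Blk) (n : ℕ) :
    2 * ((psiWith s t).take n).count true ≤ ((t.take n).map Blk.weight).sum + s.toNat := by
  induction t generalizing s n with
  | nil => simp [psiWith]
  | cons b t ih =>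
    cases n with
    | zero => simp
    | succ n =>
      have := ih s n
      have := ih (!s) n
      cases b <;> cases s <;> simp [psiWith, Blk.weight] at * <;> omega

theorem condP_psiWith {bs : List Blk} {k : ℕ}
    (hbs : ∀ i, i + (2 ^ (k + 1) - 1) ≤ bs.length →
      (((bs.drop i).take (2 ^ (k + 1) - 1)).map Blk.weight).sum ≤ 2 ^ (k + 1))
    (s : Bool) : CondP (psiWith s bs) (k + 1) := by
  intro i hi
  rw [length_psiWith] at hi
  obtain ⟨s', hs'⟩ := exists_drop_psiWith s bs i
  have hcount := two_mul_count_true_take_psiWith_le s' (bs.drop i) (2 ^ (k + 1) - 1)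
  have hweight := hbs i hi
  have hs'le : s'.toNat ≤ 1 := Bool.toNat_le s'
  have hpow : 2 ^ (k + 1) = 2 * 2 ^ k := pow_succ' 2 k
  show _ ≤ 2 ^ k
  rw [hs']
  omega

theorem sum_weight_window_le {a : List Bool} {bs : List Blk} {k : ℕ}
    (hpre : a <+: (bs.map Blk.toWord).flatten)
    (hlen : (bs.map Blk.toWord).flatten.length ≤ a.length + 1)
    (hPk : CondP a (k + 2)) (i : ℕ) (hi : i + (2 ^ (k + 1) - 1) ≤ bs.length) :
    (((bs.drop i).take (2 ^ (k + 1) - 1)).map Blk.weight).sum ≤ 2 ^ (k + 1) := by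
  set L := 2 ^ (k + 1) - 1
  set u := (bs.drop i).take L
  set n := 2 ^ (k + 2) - 1
  set P := ((bs.take i).map Blk.toWord).flatten
  set U := (u.map Blk.toWord).flatten
  by_contra! hu
  have hnL : n = L + 2 ^ (k + 1) := by
    have : 2 ^ (k + 2) = 2 * 2 ^ (k + 1) := pow_succ' 2 (k + 1)
    have : 1 ≤ 2 ^ (k + 1) := Nat.one_le_two_pow
    omega
  have hulen : u.length = L := by simp [u]; omega
  have hnU : n < U.length := by
    rw [Blk.length_flatten_toWord, hulen]; omega
  obtain ⟨R, hsplit⟩ : ∃ R, (bs.map Blk.toWord).flatten = P ++ (U ++ R) := by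
    refine ⟨((bs.drop (i + L)).map Blk.toWord).flatten, ?_⟩
    rw [← List.flatten_append, ← List.flatten_append, ← List.map_append, ← List.map_append,
      ← List.drop_drop, List.take_append_drop, List.take_append_drop]
  obtain ⟨r, hr⟩ := hpre
  have hwindow : P.length + n ≤ a.length := by
    have := congrArg List.length hsplit
    simp only [List.length_append] at this
    omega
  have hcount : 2 ^ (k + 1) < ((a.drop P.length).take n).count true := by
    have hlt : n < (U.take n).count true + u.length :=
      Blk.lt_count_true_take_flatten_toWord hnU
    have hPa : P.length ≤ a.length := by omega
    have hdrop : (a.drop P.length).take n = U.take n := by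
      rw [← List.take_append_of_le_length (l₂ := r) (by simp; omega),
        ← List.drop_append_of_le_length hPa, hr, hsplit, List.drop_left,
        List.take_append_of_le_length hnU.le]
    rw [hdrop]
    omega
  have hP : ((a.drop P.length).take n).count true ≤ 2 ^ (k + 1) := hPk P.length hwindow
  omega

/-- Lemma 4.5: let `a` be a binary word satisfying `(P_k)` which factors (up
to concatenation of one extra `0`) as a concatenation `b₁ ⋯ b_m` of blocks
from `{0, 10, 110}`, and let `ψ(a) = (c, d)`.  Then `c` and `d` each satisfy
`(P_{k−1})`. -/
theorem stmt15 (a : List Bool) (bs : List Blk) (k : ℕ)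
    (hfact : a = (bs.map Blk.toWord).flatten ∨
      a ++ [false] = (bs.map Blk.toWord).flatten)
    (hPk : CondP a k) :
    CondP (psiC bs) (k - 1) ∧ CondP (psiD bs) (k - 1) := by
  obtain ⟨hc, hd⟩ := psiC_eq_psiWith_and_psiD_eq_psiWith bs
  rcases k with _ | _ | k
  · exact ⟨condP_zero _, condP_zero _⟩
  · exact ⟨condP_zero _, condP_zero _⟩
  have hpre : a <+: (bs.map Blk.toWord).flatten := by
    rcases hfact with h | h
    · exact h ▸ List.prefix_refl a
    · exact h ▸ List.prefix_append a [false]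
  have hlen : (bs.map Blk.toWord).flatten.length ≤ a.length + 1 := by
    rcases hfact with h | h <;> rw [← h] <;> simp
  have hbs := sum_weight_window_le hpre hlen hPk
  rw [hc, hd]
  exact ⟨condP_psiWith hbs true, condP_psiWith hbs false⟩
end
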